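/- Every task well-posed under the nondeterministic I-state condenser c_ndet is well-posed under the action/observation-trace condenser c_H. -/
import Mathlib


def WellPosed {Ω A : Type*} (c : Ω → A) (T : Set Ω) : Prop :=
  c ⁻¹' (c '' T) = T

def CompleteTrace {X U Y : Type*} (f : X → U → Set X) (h : X → U → X → Set Y)
    (X₀ : Set X) (ω : ℕ → X × U × Y) : Prop :=
  (ω 0).1 ∈ X₀ ∧
  ∀ i : ℕ, (ω (i + 1)).1 ∈ f (ω i).1 (ω i).2.1 ∧
    (ω i).2.2 ∈ h (ω i).1 (ω i).2.1 (ω (i + 1)).1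

def Fset {X U Y : Type*} (f : X → U → Set X) (h : X → U → X → Set Y)
    (x : X) (u : U) (y : Y) : Set X :=
  {x' ∈ f x u | y ∈ h x u x'}

def iota {X U Y : Type*} (f : X → U → Set X) (h : X → U → X → Set Y)
    (X₀ : Set X) (ω : ℕ → X × U × Y) : ℕ → Set X
  | 0 => X₀
  | k + 1 => ⋃ x ∈ iota f h X₀ ω k, Fset f h x (ω k).2.1 (ω k).2.2

lemma iota_congr {X U Y : Type*} (f : X → U → Set X) (h : X → U → X → Set Y)
    (X₀ : Set X) (ω₁ ω₂ : ℕ → X × U × Y) (heq : ∀ i, (ω₁ i).2 = (ω₂ i).2) :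
    ∀ k, iota f h X₀ ω₁ k = iota f h X₀ ω₂ k := by
  intro k
  induction k with
  | zero => rfl
  | succ k ih => simp [iota, ih, heq k]

theorem stmt_13 {X U Y : Type*} (f : X → U → Set X) (h : X → U → X → Set Y)
    (X₀ : Set X)
    (cH : {ω : ℕ → X × U × Y // CompleteTrace f h X₀ ω} → (ℕ → U × Y))
    (cndet : {ω : ℕ → X × U × Y // CompleteTrace f h X₀ ω} → (ℕ → Set X))
    (hcH : ∀ ω, cH ω = fun i => (ω.1 i).2)
    (hcndet : ∀ ω, cndet ω = fun k => iota f h X₀ ω.1 (k + 1))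
    (T : Set {ω : ℕ → X × U × Y // CompleteTrace f h X₀ ω})
    (hT : WellPosed cndet T) :
    WellPosed cH T := by
  apply Set.Subset.antisymm
  · intro ω hω
    obtain ⟨τ, hτT, hτ⟩ := hω
    rw [← hT]
    refine ⟨τ, hτT, ?_⟩
    rw [hcndet, hcndet]
    funext k
    apply iota_congr
    intro i
    have := congrFun hτ i
    rw [hcH, hcH] at this
    exact this
  · intro ω hω
    exact ⟨ω, hω, rfl⟩
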